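/- arXiv:2104.07507 — 4 statements merged into one kernel-verified Lean document; each statement's English description precedes it below -/
import Mathlib

section
/- Cut-off energy estimate. Let n ∈ ℕ, p > 1, Λ ≥ 1, s_0 ∈ (0,1) and s_1,…,s_n ∈ [s_0,1). There is C = C(n,p,Λ) > 0 such that for each μ ∈ K(p,s_0,Λ), every x_0 ∈ ℝⁿ, r ∈ (0,1], λ ∈ (1,2], and every admissible cut-off function τ = τ_{x_0,r,λ}, one has sup_{x∈ℝⁿ} ∫_{ℝⁿ} |τ(y)−τ(x)|^p μ(x,dy) ≤ C (Σ_{k=1}^n (λ^{s_max/s_k}−1)^{−p s_k}) r^{−p s_max}. -/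
open MeasureTheory ENNReal Filter Set
open scoped ENNReal BigOperators Topology

noncomputable section

/-- `s_max`: the maximum of the orders `s k`. -/
def sMax {n : ℕ} (s : Fin n → ℝ) : ℝ := ⨆ k, s k

/-- `s̄`: the harmonic mean of the orders `s k`. -/
def sBar {n : ℕ} (s : Fin n → ℝ) : ℝ := ((1 / (n : ℝ)) * ∑ k, 1 / s k)⁻¹

/-- The anisotropic rectangle `M_r(x)`. -/
def Mrect {n : ℕ} (s : Fin n → ℝ) (r : ℝ) (x : Fin n → ℝ) : Set (Fin n → ℝ) :=
  {y | ∀ k, |y k - x k| < r ^ (sMax s / s k)}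

/-- The slab `E_r^k(x)`. -/
def Eslab {n : ℕ} (s : Fin n → ℝ) (r : ℝ) (k : Fin n) (x : Fin n → ℝ) : Set (Fin n → ℝ) :=
  {y | |x k - y k| < r ^ (sMax s / s k)}

/-- The reference family of measures `μ_axes(x, ·)`:
`μ_axes(x,dy) = ∑ k, s_k (1-s_k) |x_k - y_k|^{-1-s_k p} dy_k ∏_{i ≠ k} δ_{x_i}(dy_i)`. -/
def muAxes {n : ℕ} (p : ℝ) (s : Fin n → ℝ) (x : Fin n → ℝ) : Measure (Fin n → ℝ) :=
  ∑ k, Measure.map (fun t => Function.update x k t)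
    ((volume : Measure ℝ).withDensity
      fun t => ENNReal.ofReal (s k * (1 - s k) * |x k - t| ^ (-1 - s k * p)))

/-- The signed nonlinear form `E^μ_Ω(u,v)`. -/
def energyOn {n : ℕ} (p : ℝ) (μ : (Fin n → ℝ) → Measure (Fin n → ℝ))
    (Ω : Set (Fin n → ℝ)) (u v : (Fin n → ℝ) → ℝ) : ℝ :=
  ∫ x in Ω, ∫ y in Ω, |u y - u x| ^ (p - 2) * (u y - u x) * (v y - v x) ∂(μ x)

/-- The full-space form `E^μ(u,v)`. -/
def energy {n : ℕ} (p : ℝ) (μ : (Fin n → ℝ) → Measure (Fin n → ℝ))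
    (u v : (Fin n → ℝ) → ℝ) : ℝ := energyOn p μ Set.univ u v

/-- The symmetric `p`-energy `E^μ_Ω(u,u)`, as an extended-real integral. -/
def pEnergyOn {n : ℕ} (p : ℝ) (μ : (Fin n → ℝ) → Measure (Fin n → ℝ))
    (Ω : Set (Fin n → ℝ)) (u : (Fin n → ℝ) → ℝ) : ℝ≥0∞ :=
  ∫⁻ x in Ω, ∫⁻ y in Ω, ENNReal.ofReal (|u y - u x| ^ p) ∂(μ x)

/-- The class `K(p, s_0, Λ)` of admissible families of measures. -/
structure MemK {n : ℕ} (p s0 Λ : ℝ) (s : Fin n → ℝ)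
    (μ : (Fin n → ℝ) → Measure (Fin n → ℝ)) : Prop where
  finite : (⨆ x, ∫⁻ y, ENNReal.ofReal (min (dist x y ^ p) 1) ∂(μ x)) < ⊤
  symmetric : ∀ A B : Set (Fin n → ℝ), MeasurableSet A → MeasurableSet B →
    ∫⁻ x in A, μ x B = ∫⁻ x in B, μ x A
  tail : ∀ (x0 : Fin n → ℝ) (k : Fin n) (r : ℝ), 0 < r →
    μ x0 (Eslab s r k x0)ᶜ ≤ ENNReal.ofReal (Λ * (1 - s k) * r ^ (-(p * sMax s)))
  compare_le : ∀ (x0 : Fin n → ℝ) (ρ : ℝ), 0 < ρ → ρ < 3 →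
    ∀ u : (Fin n → ℝ) → ℝ,
      MemLp u (ENNReal.ofReal p) (volume.restrict (Mrect s ρ x0)) →
      pEnergyOn p μ (Mrect s ρ x0) u ≤
        ENNReal.ofReal Λ * pEnergyOn p (muAxes p s) (Mrect s ρ x0) u
  compare_ge : ∀ (x0 : Fin n → ℝ) (ρ : ℝ), 0 < ρ → ρ < 3 →
    ∀ u : (Fin n → ℝ) → ℝ,
      MemLp u (ENNReal.ofReal p) (volume.restrict (Mrect s ρ x0)) →
      pEnergyOn p (muAxes p s) (Mrect s ρ x0) u ≤
        ENNReal.ofReal Λ * pEnergyOn p μ (Mrect s ρ x0) u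

/-- Membership in the solution space `V^{p,μ}(Ω | ℝⁿ)`. -/
def MemV {n : ℕ} (p : ℝ) (μ : (Fin n → ℝ) → Measure (Fin n → ℝ))
    (Ω : Set (Fin n → ℝ)) (u : (Fin n → ℝ) → ℝ) : Prop :=
  Measurable u ∧ MemLp u (ENNReal.ofReal p) (volume.restrict Ω) ∧
    (∫⁻ x in Ω, ∫⁻ y, ENNReal.ofReal (|u y - u x| ^ p) ∂(μ x)) < ⊤

/-- Membership in the test-function space `H^{p,μ}_Ω(ℝⁿ)`. -/
def MemH {n : ℕ} (p : ℝ) (μ : (Fin n → ℝ) → Measure (Fin n → ℝ))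
    (Ω : Set (Fin n → ℝ)) (u : (Fin n → ℝ) → ℝ) : Prop :=
  Measurable u ∧ (∀ x, x ∉ Ω → u x = 0) ∧
    MemLp u (ENNReal.ofReal p) (volume.restrict Ω) ∧
    (∫⁻ x, ∫⁻ y, ENNReal.ofReal (|u y - u x| ^ p) ∂(μ x)) < ⊤

/-- An admissible cut-off function `τ = τ_{x0,r,λ}` with structural constant `c`:
a Lipschitz function supported in `M_{λr}(x0)`, bounded by one, equal to one on `M_r(x0)`,
whose (directional) Lipschitz constant in the `k`-th coordinate is at most
`c (λ^{s_max/s_k} - 1)⁻¹ r^{-s_max/s_k}`. -/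
def IsCutoff {n : ℕ} (s : Fin n → ℝ) (c : ℝ) (x0 : Fin n → ℝ) (r lam : ℝ)
    (τ : (Fin n → ℝ) → ℝ) : Prop :=
  (∃ L : NNReal, LipschitzWith L τ) ∧
  Function.support τ ⊆ Mrect s (lam * r) x0 ∧
  (∀ x, |τ x| ≤ 1) ∧
  (∀ x ∈ Mrect s r x0, τ x = 1) ∧
  (∀ (k : Fin n) (x : Fin n → ℝ) (h : ℝ),
    |τ (Function.update x k (x k + h)) - τ x| ≤
      c * (lam ^ (sMax s / s k) - 1)⁻¹ * r ^ (-(sMax s / s k)) * |h|)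

/-! Telescoping the coordinatewise Lipschitz bounds `b k` of `τ` along the coordinates gives
`|τ y - τ x| ≤ ∑ k, b k * |y k - x k|`, so `{y | t < |τ y - τ x|}` lies in the union of the
complements of the slabs around `x` of width `t / (n b k)`. The tail condition of `K(p, s0, Λ)`
bounds its `μ x`-measure by `∑ k, Λ (1 - s k) (n b k / t) ^ (p s k)`. Since `|τ y - τ x| ≤ 2`,
the layer-cake formula integrates this over `t ∈ (0, 2]`, and the factor `1 - s k` cancels against
`∫₀² t ^ (p - 1 - p s k) dt = 2 ^ (p (1 - s k)) / (p (1 - s k))`. -/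

theorem abs_sub_le_sum_of_abs_update_sub_le {ι : Type*} [Fintype ι] [DecidableEq ι]
    {τ : (ι → ℝ) → ℝ} {b : ι → ℝ}
    (hτ : ∀ k x h, |τ (Function.update x k (x k + h)) - τ x| ≤ b k * |h|) (x y : ι → ℝ) :
    |τ y - τ x| ≤ ∑ k, b k * |y k - x k| := by
  suffices key : ∀ A : Finset ι, |τ (A.piecewise y x) - τ x| ≤ ∑ k ∈ A, b k * |y k - x k| by
    simpa using key Finset.univ
  intro A
  induction A using Finset.induction with
  | empty => simp
  | @insert a A ha ih =>
    set z := A.piecewise y x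
    have hza : z a = x a := Finset.piecewise_eq_of_notMem _ _ _ ha
    have step : |τ (Function.update z a (y a)) - τ z| ≤ b a * |y a - x a| := by
      simpa [hza] using hτ a z (y a - x a)
    rw [Finset.piecewise_insert, Finset.sum_insert ha]
    exact (abs_sub_le _ _ _).trans (add_le_add step ih)

theorem lintegral_Ioc_zero_rpow {M b : ℝ} (hM : 0 ≤ M) (hb : -1 < b) :
    ∫⁻ t in Ioc 0 M, ENNReal.ofReal (t ^ b) = ENNReal.ofReal (M ^ (b + 1) / (b + 1)) := by
  have hint : IntegrableOn (fun t : ℝ => t ^ b) (Ioc 0 M) :=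
    (intervalIntegrable_iff_integrableOn_Ioc_of_le hM).1 (intervalIntegral.intervalIntegrable_rpow' hb)
  rw [← ofReal_integral_eq_lintegral_ofReal hint
    ((ae_restrict_iff' measurableSet_Ioc).2 (.of_forall fun t ht => Real.rpow_nonneg ht.1.le b)),
    ← intervalIntegral.integral_of_le hM, integral_rpow (.inl hb),
    Real.zero_rpow (by linarith), sub_zero]

theorem lintegral_rpow_le_of_meas_lt_le {α ι : Type*} [MeasurableSpace α] [Fintype ι]
    {μ : Measure α} {f : α → ℝ} {p M : ℝ} {A a : ι → ℝ}
    (hp : 0 < p) (hM : 0 ≤ M) (hf : Measurable f) (hf0 : ∀ x, 0 ≤ f x) (hfM : ∀ x, f x ≤ M)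
    (hA : ∀ i, 0 ≤ A i) (ha : ∀ i, a i < p)
    (htail : ∀ t, 0 < t → t < M → μ {x | t < f x} ≤ ∑ i, ENNReal.ofReal (A i * t ^ (-a i))) :
    ∫⁻ x, ENNReal.ofReal (f x ^ p) ∂μ ≤
      ∑ i, ENNReal.ofReal (p * A i * M ^ (p - a i) / (p - a i)) := by
  set g : ℝ → ℝ≥0∞ := fun t => ∑ i, ENNReal.ofReal (A i * t ^ (p - a i - 1))
  have hpointwise : ∀ t ∈ Ioi (0 : ℝ),
      μ {x | t < f x} * ENNReal.ofReal (t ^ (p - 1)) ≤ (Iic M).indicator g t := by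
    intro t (ht : 0 < t)
    rcases lt_or_ge t M with htM | hMt
    · rw [indicator_of_mem (show t ∈ Iic M from htM.le)]
      refine (mul_le_mul_left (htail t ht htM) _).trans_eq ?_
      simp only [g, Finset.sum_mul]
      refine Finset.sum_congr rfl fun i _ => ?_
      rw [← ENNReal.ofReal_mul (mul_nonneg (hA i) (Real.rpow_nonneg ht.le _)), mul_assoc,
        ← Real.rpow_add ht]
      ring_nf
    · have hempty : {x | t < f x} = ∅ :=
        eq_empty_of_forall_notMem fun x (hx : t < f x) => ((hfM x).trans hMt).not_gt hx
      simp [hempty]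
  rw [lintegral_rpow_eq_lintegral_meas_lt_mul μ (.of_forall hf0) hf.aemeasurable hp]
  calc ENNReal.ofReal p * ∫⁻ t in Ioi 0, μ {x | t < f x} * ENNReal.ofReal (t ^ (p - 1))
      ≤ ENNReal.ofReal p * ∫⁻ t in Ioi 0, (Iic M).indicator g t :=
        mul_le_mul_right (setLIntegral_mono' measurableSet_Ioi hpointwise) _
    _ = ENNReal.ofReal p * ∑ i, ENNReal.ofReal (A i) *
          ∫⁻ t in Ioc 0 M, ENNReal.ofReal (t ^ (p - a i - 1)) := by
        rw [lintegral_indicator measurableSet_Iic, Measure.restrict_restrict measurableSet_Iic,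
          Iic_inter_Ioi, lintegral_finsetSum _ fun i _ => by fun_prop]
        congr 1
        refine Finset.sum_congr rfl fun i _ => ?_
        rw [← lintegral_const_mul _ (by fun_prop)]
        refine setLIntegral_congr_fun measurableSet_Ioc fun t ht => ?_
        rw [ENNReal.ofReal_mul (hA i)]
    _ = ∑ i, ENNReal.ofReal (p * A i * M ^ (p - a i) / (p - a i)) := by
        rw [Finset.mul_sum]
        refine Finset.sum_congr rfl fun i _ => ?_
        rw [lintegral_Ioc_zero_rpow hM (by linarith [ha i]), sub_add_cancel, ← mul_assoc,
          ← ENNReal.ofReal_mul hp.le, ← ENNReal.ofReal_mul (mul_nonneg hp.le (hA i)), mul_div_assoc]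

theorem le_sMax {n : ℕ} (s : Fin n → ℝ) (k : Fin n) : s k ≤ sMax s :=
  le_ciSup (finite_range s).bddAbove k

theorem measure_lt_abs_sub_le_sum {n : ℕ} (hn : 0 < n) {p : ℝ} {s A b : Fin n → ℝ}
    (hs : ∀ k, 0 < s k) (hb : ∀ k, 0 < b k) {ν : Measure (Fin n → ℝ)} {x : Fin n → ℝ}
    (hν : ∀ k ρ, 0 < ρ → ν (Eslab s ρ k x)ᶜ ≤ ENNReal.ofReal (A k * ρ ^ (-(p * sMax s))))
    {τ : (Fin n → ℝ) → ℝ}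
    (hτ : ∀ k x h, |τ (Function.update x k (x k + h)) - τ x| ≤ b k * |h|) {t : ℝ} (ht : 0 < t) :
    ν {y | t < |τ y - τ x|} ≤
      ∑ k, ENNReal.ofReal (A k * (n * b k) ^ (p * s k) * t ^ (-(p * s k))) := by
  have hn' : (0 : ℝ) < n := Nat.cast_pos.2 hn
  set w : Fin n → ℝ := fun k => t / (n * b k)
  have hw : ∀ k, 0 < w k := fun k => div_pos ht (mul_pos hn' (hb k))
  set ρ : Fin n → ℝ := fun k => w k ^ (s k / sMax s)
  have hsmax : sMax s ≠ 0 := ((hs ⟨0, hn⟩).trans_le (le_sMax s _)).ne'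
  have hρ_width : ∀ k, ρ k ^ (sMax s / s k) = w k := fun k => by
    rw [← Real.rpow_mul (hw k).le, show s k / sMax s * (sMax s / s k) = 1 by
      field_simp [hsmax, (hs k).ne'], Real.rpow_one]
  have hρ_tail : ∀ k, ρ k ^ (-(p * sMax s)) = (n * b k) ^ (p * s k) * t ^ (-(p * s k)) :=
    fun k => by
      rw [← Real.rpow_mul (hw k).le, show s k / sMax s * -(p * sMax s) = -(p * s k) by
        field_simp [hsmax], Real.div_rpow ht.le (mul_pos hn' (hb k)).le,
        Real.rpow_neg (mul_pos hn' (hb k)).le, div_inv_eq_mul, mul_comm]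
  have hsub : {y | t < |τ y - τ x|} ⊆ ⋃ k, (Eslab s (ρ k) k x)ᶜ := by
    intro y (hy : t < |τ y - τ x|)
    by_contra hclose
    simp only [mem_iUnion, mem_compl_iff, not_exists, not_not, Eslab, mem_ofPred_eq,
      hρ_width] at hclose
    refine lt_asymm hy ?_
    calc |τ y - τ x| ≤ ∑ k, b k * |y k - x k| := abs_sub_le_sum_of_abs_update_sub_le hτ x y
      _ < ∑ k, b k * w k := by
        have : Nonempty (Fin n) := ⟨⟨0, hn⟩⟩
        refine Finset.sum_lt_sum_of_nonempty Finset.univ_nonempty fun k _ => ?_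
        rw [abs_sub_comm]
        exact mul_lt_mul_of_pos_left (hclose k) (hb k)
      _ = ∑ _k : Fin n, t / n :=
        Finset.sum_congr rfl fun k _ => by simp only [w]; field_simp [(hb k).ne']
      _ = t := by
        rw [Finset.sum_const, Finset.card_univ, Fintype.card_fin, nsmul_eq_mul]
        field_simp
  calc ν {y | t < |τ y - τ x|} ≤ ∑ k, ν (Eslab s (ρ k) k x)ᶜ :=
        (measure_mono hsub).trans (measure_iUnion_fintype_le _ _)
    _ ≤ _ := Finset.sum_le_sum fun k _ => (hν k (ρ k) (Real.rpow_pos_of_pos (hw k) _)).trans_eq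
        (by rw [hρ_tail, mul_assoc])

theorem cutoff_moment_term_le {p Λ σ S L r a c : ℝ} (hp : 0 < p) (hΛ : 0 ≤ Λ) (hσ : 0 < σ)
    (hσ1 : σ < 1) (hac : 1 ≤ a * c) (hL : 0 < L) (hr : 0 < r) :
    p * (Λ * (1 - σ) * (a * (c * L⁻¹ * r ^ (-(S / σ)))) ^ (p * σ)) * 2 ^ (p - p * σ) /
        (p - p * σ) ≤
      Λ * 2 ^ p * (a * c) ^ p * (L ^ (-(p * σ)) * r ^ (-(p * S))) := by
  have hac0 : 0 < a * c := one_pos.trans_le hac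
  have hsplit : (a * (c * L⁻¹ * r ^ (-(S / σ)))) ^ (p * σ) =
      (a * c) ^ (p * σ) * (L ^ (-(p * σ)) * r ^ (-(p * S))) := by
    rw [show a * (c * L⁻¹ * r ^ (-(S / σ))) = a * c * (L⁻¹ * r ^ (-(S / σ))) by ring,
      Real.mul_rpow hac0.le (mul_nonneg (inv_nonneg.2 hL.le) (Real.rpow_nonneg hr.le _)),
      Real.mul_rpow (inv_nonneg.2 hL.le) (Real.rpow_nonneg hr.le _),
      Real.inv_rpow hL.le, ← Real.rpow_neg hL.le, ← Real.rpow_mul hr.le]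
    congr 3
    field_simp
  have htwo : (2 : ℝ) ^ (p - p * σ) ≤ 2 ^ p :=
    Real.rpow_le_rpow_of_exponent_le one_le_two (by nlinarith)
  have hpow : (a * c) ^ (p * σ) ≤ (a * c) ^ p :=
    Real.rpow_le_rpow_of_exponent_le hac (by nlinarith)
  calc p * (Λ * (1 - σ) * (a * (c * L⁻¹ * r ^ (-(S / σ)))) ^ (p * σ)) * 2 ^ (p - p * σ) /
        (p - p * σ)
      = Λ * 2 ^ (p - p * σ) * (a * c) ^ (p * σ) * (L ^ (-(p * σ)) * r ^ (-(p * S))) := by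
        rw [hsplit, div_eq_iff (by nlinarith)]
        ring
    _ ≤ Λ * 2 ^ p * (a * c) ^ p * (L ^ (-(p * σ)) * r ^ (-(p * S))) := by
        gcongr

/-- **Cut-off energy estimate** (Lemma 2.2 of the paper). -/
theorem cutoff_energy_estimate
    (n : ℕ) (hn : 0 < n) (p Λ s0 : ℝ) (hp : 1 < p) (hΛ : 1 ≤ Λ)
    (hs0 : s0 ∈ Set.Ioo (0:ℝ) 1) (s : Fin n → ℝ) (hs : ∀ k, s k ∈ Set.Ico s0 1)
    (c : ℝ) (hc : 1 ≤ c) :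
    ∃ C : ℝ, 0 < C ∧
      ∀ μ : (Fin n → ℝ) → Measure (Fin n → ℝ), MemK p s0 Λ s μ →
      ∀ (x0 : Fin n → ℝ) (r lam : ℝ), r ∈ Set.Ioc (0:ℝ) 1 → lam ∈ Set.Ioc (1:ℝ) 2 →
      ∀ τ : (Fin n → ℝ) → ℝ, IsCutoff s c x0 r lam τ →
        (⨆ x : Fin n → ℝ, ∫⁻ y, ENNReal.ofReal (|τ y - τ x| ^ p) ∂(μ x)) ≤
          ENNReal.ofReal (C * (∑ k, (lam ^ (sMax s / s k) - 1) ^ (-(p * s k))) *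
            r ^ (-(p * sMax s))) := by
  have hs_pos : ∀ k, 0 < s k := fun k => hs0.1.trans_le (hs k).1
  have hnc : 1 ≤ (n : ℝ) * c := one_le_mul_of_one_le_of_one_le (Nat.one_le_cast.2 hn) hc
  refine ⟨Λ * 2 ^ p * ((n : ℝ) * c) ^ p, by positivity, ?_⟩
  rintro μ hμ x0 r lam hr hlam τ ⟨⟨L, hL⟩, -, hτ_le_one, -, hτ_update⟩
  have hgap : ∀ k, 0 < lam ^ (sMax s / s k) - 1 := fun k =>
    sub_pos.2 (Real.one_lt_rpow hlam.1 (div_pos ((hs_pos k).trans_le (le_sMax s k)) (hs_pos k)))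
  have hrate : ∀ k, 0 < c * (lam ^ (sMax s / s k) - 1)⁻¹ * r ^ (-(sMax s / s k)) := fun k => by
    have := hgap k
    have := hr.1
    positivity
  refine iSup_le fun x => ?_
  calc ∫⁻ y, ENNReal.ofReal (|τ y - τ x| ^ p) ∂μ x
      ≤ ∑ k, ENNReal.ofReal (p * (Λ * (1 - s k) * (n * (c * (lam ^ (sMax s / s k) - 1)⁻¹ *
          r ^ (-(sMax s / s k)))) ^ (p * s k)) * 2 ^ (p - p * s k) / (p - p * s k)) :=
      lintegral_rpow_le_of_meas_lt_le (by linarith) zero_le_two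
        (hL.continuous.sub continuous_const).abs.measurable (fun y => abs_nonneg _)
        (fun y => (abs_sub _ _).trans (by linarith [hτ_le_one x, hτ_le_one y]))
        (fun k => mul_nonneg (mul_nonneg (by linarith) (sub_nonneg.2 (hs k).2.le))
          (Real.rpow_nonneg (mul_nonneg n.cast_nonneg (hrate k).le) _))
        (fun k => by nlinarith [(hs k).2]) fun t ht _ =>
        measure_lt_abs_sub_le_sum hn hs_pos hrate (fun k ρ hρ => hμ.tail x k ρ hρ) hτ_update ht
    _ ≤ ∑ k, ENNReal.ofReal (Λ * 2 ^ p * ((n : ℝ) * c) ^ p *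
          ((lam ^ (sMax s / s k) - 1) ^ (-(p * s k)) * r ^ (-(p * sMax s)))) := by
        gcongr with k
        exact cutoff_moment_term_le (by linarith) (by linarith) (hs_pos k) (hs k).2 hnc (hgap k) hr.1
    _ = _ := by
        rw [← ENNReal.ofReal_sum_of_nonneg fun k _ => mul_nonneg (by positivity)
          (mul_nonneg (Real.rpow_nonneg (hgap k).le _) (Real.rpow_nonneg hr.1.le _)),
          Finset.mul_sum, Finset.sum_mul]
        simp only [mul_assoc]
end
end

section
/- Discrete gradient algebraic inequality. Let a, b > 0, τ_1, τ_2 ∈ [0,1], and t > p−1 > 0. Then |b−a|^{p−2}(b−a)(τ_1^p a^{−t} − τ_2^p b^{−t}) ≥ c_1 |τ_1 a^{(−t+p−1)/p} − τ_2 b^{(−t+p−1)/p}|^p − c_2 |τ_1−τ_2|^p (a^{−t+p−1} + b^{−t+p−1}), where one may take c_1 = 2^{1−p} p^p / (t−p+1)^{p−1} and c_2 = (t + 2^{1−p}(p−1)) (p/(t−p+1))^p + 2^{2(p−1)²}; in particular c_1 = c_1(p,t) > 0 and c_2 = c_2(p,t) > 0 remain bounded when t is bounded away from p−1. -/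
/-!
Assume `a ≤ b`; the inequality is symmetric under `(a, τ₁) ↔ (b, τ₂)`. Put `α = (t - p + 1) / p`.
Writing `τ₁ a^{-α} - τ₂ b^{-α} = τ₁ (a^{-α} - b^{-α}) + (τ₁ - τ₂) b^{-α}` and using
`(x + y)^p ≤ 2^{p-1} (x^p + y^p)` separates a gradient part from an error part of size
`|τ₁ - τ₂|^p b^{-(t-p+1)}`. Since `a^{-α} - b^{-α} = α ∫ₐᵇ x^{-α-1} dx` and `(α + 1) p = t + 1`,
Hölder's inequality gives `(a^{-α} - b^{-α})^p ≤ α^p (b - a)^{p-1} (a^{-t} - b^{-t}) / t`.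
Finally `τ₁^p` is traded for the mixed term `τ₁^p a^{-t} - τ₂^p b^{-t}`: with `s = a / b`, convexity
gives `τ₂^p ≤ (1 - s)^{1-p} |τ₁ - τ₂|^p + s^{1-p} τ₁^p`, and weighted AM-GM gives
`s^{1-p} ≤ θ + (1 - θ) s^{-t}` for `θ = (t - p + 1) / t`.
-/

open Real Set

namespace DiscreteGradient

lemma mul_div_rpow_eq {p l x : ℝ} (hl : 0 < l) (hx : 0 ≤ x) :
    l * (x / l) ^ p = l ^ (1 - p) * x ^ p := by
  rw [div_rpow hx hl.le, rpow_sub hl, rpow_one]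
  field_simp

lemma rpow_neg_div_rpow {x β p : ℝ} (hx : 0 ≤ x) (hp : p ≠ 0) :
    (x ^ (-(β / p))) ^ p = x ^ (-β) := by
  rw [← rpow_mul hx]
  field_simp

lemma abs_rpow_sub_two_mul_self {p x : ℝ} (hp : p ≠ 1) (hx : 0 ≤ x) :
    |x| ^ (p - 2) * x = x ^ (p - 1) := by
  rcases hx.eq_or_lt with rfl | hx
  · rw [mul_zero, zero_rpow (sub_ne_zero.2 hp)]
  · rw [abs_of_pos hx, ← rpow_add_one hx.ne']
    ring_nf

lemma rpow_sub_one_mul_one_sub_div_rpow {p a b : ℝ} (hab : a < b) (hb : 0 < b) :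
    (b - a) ^ (p - 1) * (1 - a / b) ^ (1 - p) = b ^ (p - 1) := by
  have hs : 0 < 1 - a / b := by rw [sub_pos, div_lt_one hb]; exact hab
  rw [show b - a = b * (1 - a / b) by field_simp, mul_rpow hb.le hs.le, mul_assoc,
    ← rpow_add hs, sub_add_sub_cancel', sub_self, rpow_zero, mul_one]

/-- Jensen's inequality for `w ↦ w ^ p` at the points `x / l` and `y / (1 - l)`. -/
lemma add_rpow_le_weighted {p l x y : ℝ} (hp : 1 ≤ p) (hl₀ : 0 < l) (hl₁ : l < 1)
    (hx : 0 ≤ x) (hy : 0 ≤ y) :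
    (x + y) ^ p ≤ l ^ (1 - p) * x ^ p + (1 - l) ^ (1 - p) * y ^ p := by
  have hl' : 0 < 1 - l := sub_pos.2 hl₁
  have h := (convexOn_rpow hp).2 (mem_Ici.2 (div_nonneg hx hl₀.le))
    (mem_Ici.2 (div_nonneg hy hl'.le)) hl₀.le hl'.le (add_sub_cancel l 1)
  simp only [smul_eq_mul, mul_div_cancel₀ _ hl₀.ne', mul_div_cancel₀ _ hl'.ne'] at h
  rwa [mul_div_rpow_eq hl₀ hx, mul_div_rpow_eq hl' hy] at h

lemma add_rpow_le_two_rpow_mul {p x y : ℝ} (hp : 1 ≤ p) (hx : 0 ≤ x) (hy : 0 ≤ y) :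
    (x + y) ^ p ≤ 2 ^ (p - 1) * (x ^ p + y ^ p) := by
  lift x to NNReal using hx
  lift y to NNReal using hy
  exact_mod_cast NNReal.rpow_add_le_mul_rpow_add_rpow x y hp

lemma abs_mul_sub_mul_rpow_le {p τ₁ τ₂ X Y : ℝ} (hp : 1 ≤ p) (hτ₁ : 0 ≤ τ₁) (hY : 0 ≤ Y)
    (hYX : Y ≤ X) :
    |τ₁ * X - τ₂ * Y| ^ p ≤ 2 ^ (p - 1) * (τ₁ ^ p * (X - Y) ^ p + |τ₁ - τ₂| ^ p * Y ^ p) := by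
  have hXY : 0 ≤ X - Y := sub_nonneg.2 hYX
  have htri : |τ₁ * X - τ₂ * Y| ≤ τ₁ * (X - Y) + |τ₁ - τ₂| * Y := by
    rw [show τ₁ * X - τ₂ * Y = τ₁ * (X - Y) + (τ₁ - τ₂) * Y by ring]
    refine (abs_add_le _ _).trans_eq ?_
    rw [abs_of_nonneg (mul_nonneg hτ₁ hXY), abs_mul, abs_of_nonneg hY]
  refine (rpow_le_rpow (abs_nonneg _) htri (by linarith)).trans ?_
  refine (add_rpow_le_two_rpow_mul hp (mul_nonneg hτ₁ hXY)
    (mul_nonneg (abs_nonneg _) hY)).trans_eq ?_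
  rw [mul_rpow hτ₁ hXY, mul_rpow (abs_nonneg _) hY]

/-- Weighted AM-GM with weights `(p - 1) / p` and `1 / p` at `u / D` and `D ^ (p - 1) * y`. -/
lemma rpow_one_div_le_mean_mul_rpow {p u D y : ℝ} (hp : 1 < p) (hu : 0 < u) (hD : 0 < D)
    (hy : 0 ≤ y) :
    y ^ (1 / p) ≤ ((p - 1) * (u / D) + D ^ (p - 1) * y) / p * u ^ (1 / p - 1) := by
  have hp₀ : 0 < p := by linarith
  have amgm := geom_mean_le_arith_mean2_weighted (div_nonneg (sub_nonneg.2 hp.le) hp₀.le)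
    (one_div_nonneg.2 hp₀.le) (div_nonneg hu.le hD.le) (mul_nonneg (rpow_nonneg hD.le (p - 1)) hy)
    (by field_simp; ring)
  have hgeom : (u / D) ^ ((p - 1) / p) * (D ^ (p - 1) * y) ^ (1 / p)
      = u ^ ((p - 1) / p) * y ^ (1 / p) := by
    rw [div_rpow hu.le hD.le, mul_rpow (rpow_nonneg hD.le _) hy, ← rpow_mul hD.le,
      show (p - 1) * (1 / p) = (p - 1) / p by ring]
    field_simp [(rpow_pos_of_pos hD ((p - 1) / p)).ne']
  have hcancel : u ^ ((p - 1) / p) * u ^ (1 / p - 1) = 1 := by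
    rw [← rpow_add hu, show (p - 1) / p + (1 / p - 1) = 0 by field_simp; ring, rpow_zero]
  calc y ^ (1 / p) = u ^ ((p - 1) / p) * y ^ (1 / p) * u ^ (1 / p - 1) := by
        rw [mul_right_comm, hcancel, one_mul]
    _ ≤ ((p - 1) * (u / D) + D ^ (p - 1) * y) / p * u ^ (1 / p - 1) := by
        gcongr
        rw [← hgeom]
        exact amgm.trans_eq (by ring)

lemma hasDerivAt_rpow_sub_mul_rpow_neg_sub {p t a x : ℝ} (ht : t ≠ 0) (ha : 0 < a)
    (hax : a < x) :
    HasDerivAt (fun y => (y - a) ^ (p - 1) * ((a ^ (-t) - y ^ (-t)) / t))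
      ((p - 1) * ((x - a) ^ (p - 1) * ((a ^ (-t) - x ^ (-t)) / t)) / (x - a)
        + (x - a) ^ (p - 1) * x ^ (-t - 1)) x := by
  have hxa : 0 < x - a := sub_pos.2 hax
  have hx : 0 < x := ha.trans hax
  have h₁ : HasDerivAt (fun y => (y - a) ^ (p - 1)) (1 * (p - 1) * (x - a) ^ (p - 1 - 1)) x :=
    ((hasDerivAt_id x).sub_const a).rpow_const (Or.inl hxa.ne')
  have h₂ : HasDerivAt (fun y => (a ^ (-t) - y ^ (-t)) / t) (-(-t * x ^ (-t - 1)) / t) x :=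
    ((hasDerivAt_rpow_const (Or.inl hx.ne')).const_sub _).div_const t
  refine (h₁.mul h₂).congr_deriv ?_
  rw [rpow_sub_one hxa.ne']
  field_simp

/-- Hölder's inequality for `∫ₐᵇ x ^ (-α - 1) dx` with `α = (t - p + 1) / p`, proved by showing
that `x ↦ α u(x) ^ (1 / p) + x ^ (-α)` is monotone, where
`u(x) = (x - a) ^ (p - 1) (a ^ (-t) - x ^ (-t)) / t`; the sign of the derivative is the AM-GM
inequality above. -/
lemma rpow_neg_sub_rpow_neg_le {p t a b : ℝ} (hp : 1 < p) (ht : p - 1 < t) (ha : 0 < a)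
    (hab : a ≤ b) :
    a ^ (-((t - p + 1) / p)) - b ^ (-((t - p + 1) / p))
      ≤ (t - p + 1) / p * ((b - a) ^ (p - 1) * ((a ^ (-t) - b ^ (-t)) / t)) ^ (1 / p) := by
  have hp₀ : 0 < p := by linarith
  have ht₀ : 0 < t := by linarith
  set α := (t - p + 1) / p with hα_def
  have hα : 0 < α := div_pos (by linarith) hp₀
  set u : ℝ → ℝ := fun y => (y - a) ^ (p - 1) * ((a ^ (-t) - y ^ (-t)) / t)
  set u' : ℝ → ℝ := fun x =>
    (p - 1) * u x / (x - a) + (x - a) ^ (p - 1) * x ^ (-t - 1)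
  have hcont : ContinuousOn (fun x => α * u x ^ (1 / p) + x ^ (-α)) (Icc a b) := by
    have hpos : ∀ x ∈ Icc a b, x ≠ 0 := fun x hx => (ha.trans_le hx.1).ne'
    refine ContinuousOn.add (continuousOn_const.mul (ContinuousOn.rpow_const ?_
      fun x _ => Or.inr (by positivity)))
      (continuousOn_id.rpow_const fun x hx => Or.inl (hpos x hx))
    refine ContinuousOn.mul (continuousOn_id.sub continuousOn_const |>.rpow_const
      fun x hx => Or.inr (by linarith)) (ContinuousOn.div_const (continuousOn_const.sub
        (continuousOn_id.rpow_const fun x hx => Or.inl (hpos x hx))) _)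
  have hu_pos : ∀ x ∈ Ioo a b, 0 < u x := fun x hx =>
    mul_pos (rpow_pos_of_pos (sub_pos.2 hx.1) _)
      (div_pos (sub_pos.2 (rpow_lt_rpow_of_neg ha hx.1 (by linarith))) ht₀)
  have hderiv : ∀ x ∈ Ioo a b, HasDerivAt (fun x => α * u x ^ (1 / p) + x ^ (-α))
      (α * (u' x * (1 / p) * u x ^ (1 / p - 1)) + -α * x ^ (-α - 1)) x := fun x hx =>
    (((hasDerivAt_rpow_sub_mul_rpow_neg_sub ht₀.ne' ha hx.1).rpow_const
      (Or.inl (hu_pos x hx).ne')).const_mul α).add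
        (hasDerivAt_rpow_const (Or.inl (ha.trans hx.1).ne'))
  have hderiv_nonneg : ∀ x ∈ Ioo a b,
      0 ≤ α * (u' x * (1 / p) * u x ^ (1 / p - 1)) + -α * x ^ (-α - 1) := by
    intro x hx
    have hx₀ : 0 < x := ha.trans hx.1
    have h := rpow_one_div_le_mean_mul_rpow hp (hu_pos x hx) (sub_pos.2 hx.1)
      (rpow_nonneg hx₀.le (-t - 1))
    rw [← rpow_mul hx₀.le,
      show (-t - 1) * (1 / p) = -α - 1 by rw [hα_def]; field_simp; ring] at h
    have h' : x ^ (-α - 1) ≤ u' x * (1 / p) * u x ^ (1 / p - 1) := h.trans_eq (by ring)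
    linarith [mul_le_mul_of_nonneg_left h' hα.le]
  have hmono := monotoneOn_of_hasDerivWithinAt_nonneg (convex_Icc a b) hcont
    (fun x hx => (hderiv x (by rwa [interior_Icc] at hx)).hasDerivWithinAt)
    (fun x hx => hderiv_nonneg x (by rwa [interior_Icc] at hx))
  have h := hmono (left_mem_Icc.2 hab) (right_mem_Icc.2 hab) hab
  have hua : u a = 0 := by simp [u, zero_rpow (by linarith : p - 1 ≠ 0)]
  simp only [hua, zero_rpow (one_div_pos.2 hp₀).ne', mul_zero, zero_add] at h
  linarith

lemma rpow_neg_sub_rpow_neg_rpow_le {p t a b : ℝ} (hp : 1 < p) (ht : p - 1 < t) (ha : 0 < a)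
    (hab : a ≤ b) :
    (a ^ (-((t - p + 1) / p)) - b ^ (-((t - p + 1) / p))) ^ p
      ≤ ((t - p + 1) / p) ^ p * ((b - a) ^ (p - 1) * ((a ^ (-t) - b ^ (-t)) / t)) := by
  have hp₀ : 0 < p := by linarith
  have hα : 0 ≤ (t - p + 1) / p := div_nonneg (by linarith) hp₀.le
  have hu : 0 ≤ (b - a) ^ (p - 1) * ((a ^ (-t) - b ^ (-t)) / t) :=
    mul_nonneg (rpow_nonneg (sub_nonneg.2 hab) _) (div_nonneg
      (sub_nonneg.2 (rpow_le_rpow_of_nonpos ha hab (by linarith))) (by linarith))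
  have h := rpow_le_rpow (sub_nonneg.2 (rpow_le_rpow_of_nonpos ha hab (neg_nonpos.2 hα)))
    (rpow_neg_sub_rpow_neg_le hp ht ha hab) hp₀.le
  rwa [mul_rpow hα (rpow_nonneg hu _), ← rpow_mul hu, one_div_mul_cancel hp₀.ne', rpow_one] at h

lemma rpow_le_mul_add_one_sub_rpow_mul {p t s τ₁ τ₂ : ℝ} (hp : 1 < p) (ht : p - 1 < t)
    (hs₀ : 0 < s) (hs₁ : s < 1) (hτ₁ : 0 ≤ τ₁) (hτ₂ : 0 ≤ τ₂) :
    τ₂ ^ p ≤ τ₁ ^ p * ((t - p + 1) / t + (p - 1) / t * s ^ (-t))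
      + (1 - s) ^ (1 - p) * |τ₁ - τ₂| ^ p := by
  have ht₀ : 0 < t := by linarith
  have hsplit : τ₂ ^ p ≤ (1 - s) ^ (1 - p) * |τ₁ - τ₂| ^ p + s ^ (1 - p) * τ₁ ^ p := by
    have h := add_rpow_le_weighted hp.le (sub_pos.2 hs₁) (by linarith) (abs_nonneg (τ₁ - τ₂))
      hτ₁
    rw [sub_sub_cancel] at h
    refine le_trans (rpow_le_rpow hτ₂ ?_ (by linarith)) h
    linarith [le_abs_self (τ₂ - τ₁), abs_sub_comm τ₁ τ₂]
  have hamgm : s ^ (1 - p) ≤ (t - p + 1) / t + (p - 1) / t * s ^ (-t) := by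
    have h := geom_mean_le_arith_mean2_weighted (w₁ := (t - p + 1) / t) (w₂ := (p - 1) / t)
      (div_nonneg (by linarith) ht₀.le) (div_nonneg (by linarith) ht₀.le) zero_le_one
      (rpow_nonneg hs₀.le (-t)) (by field_simp; ring)
    rwa [one_rpow, one_mul, mul_one, ← rpow_mul hs₀.le,
      show -t * ((p - 1) / t) = 1 - p by field_simp; ring] at h
  nlinarith [rpow_nonneg hτ₁ p]

lemma mul_rpow_mul_le_of_le {p t a b τ₁ τ₂ : ℝ} (hp : 1 < p) (ht : p - 1 < t) (ha : 0 < a)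
    (hab : a ≤ b) (hτ₁ : 0 ≤ τ₁) (hτ₂ : 0 ≤ τ₂) :
    (t - p + 1) * (τ₁ ^ p * ((b - a) ^ (p - 1) * ((a ^ (-t) - b ^ (-t)) / t)))
      ≤ (b - a) ^ (p - 1) * (τ₁ ^ p * a ^ (-t) - τ₂ ^ p * b ^ (-t))
        + |τ₁ - τ₂| ^ p * b ^ (-(t - p + 1)) := by
  have hb : 0 < b := ha.trans_le hab
  have hK : 0 ≤ |τ₁ - τ₂| ^ p * b ^ (-(t - p + 1)) := by positivity
  rcases hab.eq_or_lt with rfl | hlt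
  · rw [sub_self, zero_rpow (by linarith)]
    simpa using hK
  have ht₀ : 0 < t := by linarith
  have h := rpow_le_mul_add_one_sub_rpow_mul hp ht (div_pos ha hb) ((div_lt_one hb).2 hlt) hτ₁ hτ₂
  have hscale : 0 ≤ (b - a) ^ (p - 1) * b ^ (-t) := by
    have := sub_pos.2 hlt
    positivity
  have hat : (a / b) ^ (-t) * b ^ (-t) = a ^ (-t) := by
    rw [div_rpow ha.le hb.le]; field_simp
  have hbt : b ^ (p - 1) * b ^ (-t) = b ^ (-(t - p + 1)) := by
    rw [← rpow_add hb]; ring_nf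
  have hD := rpow_sub_one_mul_one_sub_div_rpow (p := p) hlt hb
  have h' : (b - a) ^ (p - 1) * b ^ (-t) * τ₂ ^ p
      ≤ (b - a) ^ (p - 1) * τ₁ ^ p * ((t - p + 1) / t * b ^ (-t) + (p - 1) / t * a ^ (-t))
        + |τ₁ - τ₂| ^ p * b ^ (-(t - p + 1)) := by
    refine (mul_le_mul_of_nonneg_left h hscale).trans_eq ?_
    rw [← hat, ← hbt, ← hD]; ring
  linear_combination h' + τ₁ ^ p * (b - a) ^ (p - 1) * a ^ (-t) * mul_inv_cancel₀ ht₀.ne'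

noncomputable def c₁ (p t : ℝ) : ℝ := 2 ^ (1 - p) * p ^ p / (t - p + 1) ^ (p - 1)

noncomputable def c₂ (p t : ℝ) : ℝ :=
  (t + 2 ^ (1 - p) * (p - 1)) * (p / (t - p + 1)) ^ p + 2 ^ (2 * (p - 1) ^ 2)

lemma c₁_mul_two_rpow {p t : ℝ} (hp : 0 < p) (ht : p - 1 < t) :
    c₁ p t * 2 ^ (p - 1) = (t - p + 1) * (p / (t - p + 1)) ^ p := by
  have hβ : 0 < t - p + 1 := by linarith
  have h2 : (2 : ℝ) ^ (1 - p) * 2 ^ (p - 1) = 1 := by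
    rw [← rpow_add two_pos, sub_add_sub_cancel', sub_self, rpow_zero]
  calc c₁ p t * 2 ^ (p - 1) = (2 ^ (1 - p) * 2 ^ (p - 1)) * (p ^ p / (t - p + 1) ^ (p - 1)) := by
        rw [c₁]; ring
    _ = (t - p + 1) * (p / (t - p + 1)) ^ p := by
        rw [h2, one_mul, rpow_sub_one hβ.ne', div_rpow hp.le hβ.le]
        field_simp

lemma add_one_le_c₂ {p t : ℝ} (hp : 1 < p) (ht : p - 1 < t) :
    (t - p + 1) * (p / (t - p + 1)) ^ p + 1 ≤ c₂ p t := by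
  have hpow : 0 ≤ (p / (t - p + 1)) ^ p := rpow_nonneg (div_nonneg (by linarith) (by linarith)) _
  have h₁ : 0 ≤ (2 : ℝ) ^ (1 - p) * (p - 1) := mul_nonneg (by positivity) (by linarith)
  have h₂ : (1 : ℝ) ≤ 2 ^ (2 * (p - 1) ^ 2) := one_le_rpow one_le_two (by positivity)
  rw [c₂]
  nlinarith

lemma add_one_mul_le_c₂_mul {p t x y : ℝ} (hp : 1 < p) (ht : p - 1 < t) (hx : 0 ≤ x)
    (hxy : x ≤ y) :
    ((t - p + 1) * (p / (t - p + 1)) ^ p + 1) * x ≤ c₂ p t * (y + x) := by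
  have hP : 0 ≤ (t - p + 1) * (p / (t - p + 1)) ^ p :=
    mul_nonneg (by linarith) (rpow_nonneg (div_nonneg (by linarith) (by linarith)) _)
  have hc₂ := add_one_le_c₂ hp ht
  nlinarith

lemma c₁_mul_le_of_le {p t a b τ₁ τ₂ : ℝ} (hp : 1 < p) (ht : p - 1 < t) (ha : 0 < a)
    (hab : a ≤ b) (hτ₁ : 0 ≤ τ₁) (hτ₂ : 0 ≤ τ₂) :
    c₁ p t * |τ₁ * a ^ ((-t + p - 1) / p) - τ₂ * b ^ ((-t + p - 1) / p)| ^ p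
      - c₂ p t * |τ₁ - τ₂| ^ p * (a ^ (-t + p - 1) + b ^ (-t + p - 1))
      ≤ |b - a| ^ (p - 2) * (b - a) * (τ₁ ^ p * a ^ (-t) - τ₂ ^ p * b ^ (-t)) := by
  have hp₀ : 0 < p := by linarith
  have hb : 0 < b := ha.trans_le hab
  rw [show (-t + p - 1) / p = -((t - p + 1) / p) by ring, show -t + p - 1 = -(t - p + 1) by ring,
    abs_rpow_sub_two_mul_self hp.ne' (sub_nonneg.2 hab)]
  set α := (t - p + 1) / p
  set P := (t - p + 1) * (p / (t - p + 1)) ^ p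
  set Δ := |τ₁ - τ₂|
  set u := (b - a) ^ (p - 1) * ((a ^ (-t) - b ^ (-t)) / t)
  have hβ : 0 < t - p + 1 := by linarith
  have hα : 0 ≤ α := div_nonneg hβ.le hp₀.le
  have hΔ : 0 ≤ Δ ^ p := rpow_nonneg (abs_nonneg _) _
  have hXY : b ^ (-α) ≤ a ^ (-α) := rpow_le_rpow_of_nonpos ha hab (neg_nonpos.2 hα)
  have hconv : |τ₁ * a ^ (-α) - τ₂ * b ^ (-α)| ^ p
      ≤ 2 ^ (p - 1) * (τ₁ ^ p * (a ^ (-α) - b ^ (-α)) ^ p + Δ ^ p * b ^ (-(t - p + 1))) := by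
    have h := abs_mul_sub_mul_rpow_le (τ₂ := τ₂) hp.le hτ₁ (rpow_nonneg hb.le _) hXY
    rwa [rpow_neg_div_rpow hb.le hp₀.ne'] at h
  have hholder : P * (τ₁ ^ p * (a ^ (-α) - b ^ (-α)) ^ p) ≤ (t - p + 1) * (τ₁ ^ p * u) := by
    have hPα : P * α ^ p = t - p + 1 := by
      rw [mul_assoc, ← mul_rpow (div_nonneg hp₀.le hβ.le) hα, div_mul_div_cancel₀ hβ.ne',
        div_self hp₀.ne', one_rpow, mul_one]
    calc P * (τ₁ ^ p * (a ^ (-α) - b ^ (-α)) ^ p) ≤ P * (τ₁ ^ p * (α ^ p * u)) := by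
          gcongr
          exact rpow_neg_sub_rpow_neg_rpow_le hp ht ha hab
      _ = (t - p + 1) * (τ₁ ^ p * u) := by rw [← hPα]; ring
  have herror := add_one_mul_le_c₂_mul hp ht (mul_nonneg hΔ (rpow_nonneg hb.le _))
    (mul_le_mul_of_nonneg_left (rpow_le_rpow_of_nonpos ha hab (neg_nonpos.2 hβ.le)) hΔ)
  have hc₁ : 0 ≤ c₁ p t :=
    div_nonneg (mul_nonneg (rpow_nonneg zero_le_two _) (rpow_nonneg hp₀.le _))
      (rpow_nonneg hβ.le _)
  have hbracket := mul_rpow_mul_le_of_le hp ht ha hab hτ₁ hτ₂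
  rw [sub_le_iff_le_add]
  calc c₁ p t * |τ₁ * a ^ (-α) - τ₂ * b ^ (-α)| ^ p
      ≤ c₁ p t * 2 ^ (p - 1) * (τ₁ ^ p * (a ^ (-α) - b ^ (-α)) ^ p
          + Δ ^ p * b ^ (-(t - p + 1))) := by
        rw [mul_assoc]; exact mul_le_mul_of_nonneg_left hconv hc₁
    _ = P * (τ₁ ^ p * (a ^ (-α) - b ^ (-α)) ^ p) + P * (Δ ^ p * b ^ (-(t - p + 1))) := by
        rw [c₁_mul_two_rpow hp₀ ht, mul_add]
    _ ≤ (b - a) ^ (p - 1) * (τ₁ ^ p * a ^ (-t) - τ₂ ^ p * b ^ (-t))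
          + c₂ p t * Δ ^ p * (a ^ (-(t - p + 1)) + b ^ (-(t - p + 1))) := by
        linarith

end DiscreteGradient

/-- **Discrete gradient algebraic inequality** (Lemma A.5 of the paper), with the explicit
constants `c₁ = 2^{1-p} p^p / (t-p+1)^{p-1}` and
`c₂ = (t + 2^{1-p}(p-1)) (p/(t-p+1))^p + 2^{2(p-1)²}`. -/
theorem discrete_gradient_inequality
    (p t a b τ1 τ2 : ℝ) (hp : 1 < p) (ht : p - 1 < t) (ha : 0 < a) (hb : 0 < b)
    (hτ1 : τ1 ∈ Set.Icc (0:ℝ) 1) (hτ2 : τ2 ∈ Set.Icc (0:ℝ) 1) :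
    (2:ℝ) ^ (1 - p) * p ^ p / (t - p + 1) ^ (p - 1) *
        |τ1 * a ^ ((-t + p - 1) / p) - τ2 * b ^ ((-t + p - 1) / p)| ^ p
      - ((t + 2 ^ (1 - p) * (p - 1)) * (p / (t - p + 1)) ^ p + 2 ^ (2 * (p - 1) ^ 2)) *
          |τ1 - τ2| ^ p * (a ^ (-t + p - 1) + b ^ (-t + p - 1))
      ≤ |b - a| ^ (p - 2) * (b - a) * (τ1 ^ p * a ^ (-t) - τ2 ^ p * b ^ (-t)) := by
  rcases le_total a b with hab | hba
  · exact DiscreteGradient.c₁_mul_le_of_le hp ht ha hab hτ1.1 hτ2.1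
  · have h := DiscreteGradient.c₁_mul_le_of_le hp ht hb hba hτ2.1 hτ1.1
    rw [abs_sub_comm (τ2 * _), abs_sub_comm τ2, abs_sub_comm a, add_comm (b ^ _)] at h
    unfold DiscreteGradient.c₁ DiscreteGradient.c₂ at h
    linarith
end

section
/- First algebraic inequality for negative powers. Let a, b > 0 and t > p−1 > 0. Then |b−a|^{p−2}(b−a)(a^{−t} − b^{−t}) ≥ t (p/(t−p+1))^p |a^{(−t+p−1)/p} − b^{(−t+p−1)/p}|^p. -/
/-!
Put `e = (-t + p - 1) / p < 0`. For `a ≤ b`, the function `f s = s ^ (e - 1)` has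
`∫_a^b f = (a ^ e - b ^ e) / |e|` and `∫_a^b f ^ p = (a ^ (-t) - b ^ (-t)) / t`, so the claim is
Hölder's inequality against the constant `1` on `[a, b]`: `(∫_a^b f) ^ p ≤ (b - a) ^ (p - 1) ∫_a^b f ^ p`.
Both sides are symmetric in `a` and `b`.
-/

open MeasureTheory Set Real

theorem rpow_integral_le_measureReal_mul_integral_rpow {α : Type*} [MeasurableSpace α]
    {μ : Measure α} [IsFiniteMeasure μ] {f : α → ℝ} {p : ℝ} (hp : 1 < p) (hf₀ : 0 ≤ᵐ[μ] f)
    (hf : MemLp f (ENNReal.ofReal p) μ) :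
    (∫ x, f x ∂μ) ^ p ≤ μ.real univ ^ (p - 1) * ∫ x, f x ^ p ∂μ := by
  have holder := integral_mul_le_Lp_mul_Lq_of_nonneg (HolderConjugate.conjExponent hp) hf₀
    (.of_forall fun _ => zero_le_one) hf (memLp_const 1)
  simp only [mul_one, one_rpow, integral_const, smul_eq_mul] at holder
  have hI : 0 ≤ ∫ x, f x ^ p ∂μ := integral_nonneg_of_ae <| by
    filter_upwards [hf₀] with x hx using rpow_nonneg hx p
  calc (∫ x, f x ∂μ) ^ p
      ≤ ((∫ x, f x ^ p ∂μ) ^ (1 / p) * μ.real univ ^ (1 / p.conjExponent)) ^ p :=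
        rpow_le_rpow (integral_nonneg_of_ae hf₀) holder (by linarith)
    _ = μ.real univ ^ (p - 1) * ∫ x, f x ^ p ∂μ := by
        rw [mul_rpow (by positivity) (by positivity), ← rpow_mul hI, ← rpow_mul measureReal_nonneg,
          one_div_mul_cancel (by linarith), rpow_one, conjExponent, one_div_div,
          div_mul_cancel₀ _ (by linarith), mul_comm]

theorem intervalIntegral.rpow_integral_le_mul_integral_rpow {f : ℝ → ℝ} {a b p : ℝ}
    (hab : a ≤ b) (hp : 1 < p) (hf : ContinuousOn f (Icc a b)) (hf₀ : ∀ x ∈ Ioc a b, 0 ≤ f x) :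
    (∫ x in a..b, f x) ^ p ≤ (b - a) ^ (p - 1) * ∫ x in a..b, f x ^ p := by
  have : IsFiniteMeasure (volume.restrict (Ioc a b)) :=
    isFiniteMeasure_restrict.2 measure_Ioc_lt_top.ne
  obtain ⟨C, hC⟩ := isCompact_Icc.exists_bound_of_continuousOn hf
  have hmem : MemLp f (ENNReal.ofReal p) (volume.restrict (Ioc a b)) :=
    .of_bound ((hf.mono Ioc_subset_Icc_self).aestronglyMeasurable measurableSet_Ioc) C
      ((ae_restrict_iff' measurableSet_Ioc).2 (.of_forall fun x hx => hC x (Ioc_subset_Icc_self hx)))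
  simpa only [intervalIntegral.integral_of_le hab, measureReal_restrict_apply_univ,
    volume_real_Ioc_of_le hab] using rpow_integral_le_measureReal_mul_integral_rpow hp
      ((ae_restrict_iff' measurableSet_Ioc).2 (.of_forall hf₀)) hmem

theorem rpow_sub_rpow_div_rpow_le {a b p r : ℝ} (ha : 0 < a) (hab : a ≤ b) (hp : 1 < p)
    (hr : r ≠ -1) (hrp : r * p ≠ -1) :
    ((b ^ (r + 1) - a ^ (r + 1)) / (r + 1)) ^ p ≤
      (b - a) ^ (p - 1) * ((b ^ (r * p + 1) - a ^ (r * p + 1)) / (r * p + 1)) := by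
  have hpos : ∀ x ∈ Icc a b, 0 < x := fun x hx => ha.trans_le hx.1
  have h0 : (0 : ℝ) ∉ uIcc a b := fun h => (hpos 0 (uIcc_of_le hab ▸ h)).false
  have hpow : ∫ x in a..b, (x ^ r) ^ p = ∫ x in a..b, x ^ (r * p) :=
    intervalIntegral.integral_congr fun x hx => (rpow_mul (hpos x (uIcc_of_le hab ▸ hx)).le r p).symm
  rw [← integral_rpow (.inr ⟨hr, h0⟩), ← integral_rpow (.inr ⟨hrp, h0⟩), ← hpow]
  exact intervalIntegral.rpow_integral_le_mul_integral_rpow hab hp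
    (continuousOn_id.rpow_const fun x hx => .inl (hpos x hx).ne')
    fun x hx => rpow_nonneg (hpos x (Ioc_subset_Icc_self hx)).le r

theorem first_algebraic_inequality_of_le {p t a b : ℝ} (hp : 1 < p) (ht : p - 1 < t) (ha : 0 < a)
    (hab : a ≤ b) :
    t * (p / (t - p + 1)) ^ p *
        |a ^ ((-t + p - 1) / p) - b ^ ((-t + p - 1) / p)| ^ p ≤
      |b - a| ^ (p - 2) * (b - a) * (a ^ (-t) - b ^ (-t)) := by
  set e := (-t + p - 1) / p
  have hp₀ : 0 < p := by linarith
  have ht₀ : 0 < t := by linarith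
  have he : e < 0 := div_neg_of_neg_of_pos (by linarith) hp₀
  have hc : 0 < p / (t - p + 1) := div_pos hp₀ (by linarith)
  have hI : (b ^ e - a ^ e) / e = (a ^ e - b ^ e) * (p / (t - p + 1)) := by
    have hce : p / (t - p + 1) * e = -1 := by
      simp only [e]
      field_simp [show t - p + 1 ≠ 0 by linarith]
      ring
    rw [div_eq_iff he.ne]
    linear_combination -(a ^ e - b ^ e) * hce
  have hJ : (b ^ (-t) - a ^ (-t)) / -t = (a ^ (-t) - b ^ (-t)) / t := by
    rw [div_neg, ← neg_div, neg_sub]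
  have hexp : (e - 1) * p + 1 = -t := by
    simp only [e]
    field_simp
    ring
  have holder := rpow_sub_rpow_div_rpow_le ha hab hp (r := e - 1) (by linarith) (by linarith)
  have hA : 0 ≤ a ^ e - b ^ e := sub_nonneg.2 (rpow_le_rpow_of_nonpos ha hab he.le)
  have hba : 0 ≤ b - a := sub_nonneg.2 hab
  rw [sub_add_cancel, hexp, hI, hJ, mul_rpow hA hc.le] at holder
  rw [abs_of_nonneg hA, abs_of_nonneg hba, ← rpow_add_one' hba (by linarith),
    show p - 2 + 1 = p - 1 by ring]
  calc t * (p / (t - p + 1)) ^ p * (a ^ e - b ^ e) ^ p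
      = t * ((a ^ e - b ^ e) ^ p * (p / (t - p + 1)) ^ p) := by ring
    _ ≤ t * ((b - a) ^ (p - 1) * ((a ^ (-t) - b ^ (-t)) / t)) :=
        mul_le_mul_of_nonneg_left holder ht₀.le
    _ = (b - a) ^ (p - 1) * (a ^ (-t) - b ^ (-t)) := by field_simp

/-- **First algebraic inequality for negative powers** (Lemma A.1 of the paper). -/
theorem first_algebraic_inequality
    (p t a b : ℝ) (hp : 1 < p) (ht : p - 1 < t) (ha : 0 < a) (hb : 0 < b) :
    t * (p / (t - p + 1)) ^ p *
        |a ^ ((-t + p - 1) / p) - b ^ ((-t + p - 1) / p)| ^ p ≤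
      |b - a| ^ (p - 2) * (b - a) * (a ^ (-t) - b ^ (-t)) := by
  rcases le_total a b with hab | hba
  · exact first_algebraic_inequality_of_le hp ht ha hab
  · have h := first_algebraic_inequality_of_le hp ht hb hba
    rw [abs_sub_comm a b, abs_sub_comm (b ^ _)] at h
    linarith
end

section
/- Second algebraic inequality for negative powers. Let a, b > 0 and t > p−1 > 0. Then |b−a|^{p−1} min{a^{−t}, b^{−t}} ≤ (p/(t−p+1))^{p−1} |a^{(−t+p−1)/p} − b^{(−t+p−1)/p}|^{p−1} min{a^{(−t+p−1)/p}, b^{(−t+p−1)/p}}. -/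
/-!
Write `α = (-t + p - 1) / p < 0` and assume `a ≤ b`. Then `-t = (α - 1)(p - 1) + α`, so the left-hand
side is `((b - a) b^(α-1))^(p-1) b^α`, and the right-hand side is `((a^α - b^α) / (-α))^(p-1) b^α`,
because `p / (t - p + 1) = (-α)⁻¹`. The claim thus reduces to the tangent-line inequality
`b^α + α b^(α-1) (a - b) ≤ a^α` for the convex function `x ↦ x^α`, which follows from Bernoulli's
inequality with exponent `1 - α ≥ 1`.
-/

open Real

lemma one_add_mul_sub_one_le_rpow {x α : ℝ} (hx : 0 < x) (hα : α ≤ 0) :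
    1 + α * (x - 1) ≤ x ^ α := by
  have bernoulli := one_add_mul_self_le_rpow_one_add (s := x⁻¹ - 1) (p := 1 - α)
    (by linarith [inv_pos.2 hx]) (by linarith)
  rw [add_sub_cancel, inv_rpow hx.le, ← rpow_neg hx.le, neg_sub, rpow_sub_one hx.ne'] at bernoulli
  have scaled := mul_le_mul_of_nonneg_left bernoulli hx.le
  have hx' : x * ((1 - α) * (x⁻¹ - 1)) = (1 - α) * (1 - x) := by field_simp
  rw [mul_div_cancel₀ _ hx.ne', mul_add, mul_one, hx'] at scaled
  linarith

lemma rpow_add_mul_rpow_sub_one_mul_sub_le_rpow {a b α : ℝ} (ha : 0 < a) (hb : 0 < b)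
    (hα : α ≤ 0) : b ^ α + α * b ^ (α - 1) * (a - b) ≤ a ^ α := by
  have tangent := one_add_mul_sub_one_le_rpow (div_pos ha hb) hα
  rw [div_rpow ha.le hb.le, le_div_iff₀ (rpow_pos_of_pos hb α)] at tangent
  have hb' : (1 + α * (a / b - 1)) * b ^ α = b ^ α + α * (b ^ α / b) * (a - b) := by
    field_simp
  rwa [rpow_sub_one hb.ne', ← hb']

lemma second_algebraic_inequality_of_le
    (p t a b : ℝ) (hp : 1 < p) (ht : p - 1 < t) (ha : 0 < a) (hab : a ≤ b) :
    |b - a| ^ (p - 1) * min (a ^ (-t)) (b ^ (-t)) ≤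
      (p / (t - p + 1)) ^ (p - 1) *
        |a ^ ((-t + p - 1) / p) - b ^ ((-t + p - 1) / p)| ^ (p - 1) *
        min (a ^ ((-t + p - 1) / p)) (b ^ ((-t + p - 1) / p)) := by
  set α := (-t + p - 1) / p with hα_def
  have hb : 0 < b := ha.trans_le hab
  have hα : α < 0 := div_neg_of_neg_of_pos (by linarith) (by linarith)
  have hconst : p / (t - p + 1) = (-α)⁻¹ := by
    rw [hα_def, ← neg_div, inv_div]; congr 1; ring
  have hexp : -t = (α - 1) * (p - 1) + α := by
    rw [hα_def]; field_simp; ring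
  have hmono : b ^ α ≤ a ^ α := rpow_le_rpow_of_nonpos ha hab hα.le
  rw [min_eq_right (rpow_le_rpow_of_nonpos ha hab (by linarith)), min_eq_right hmono,
    abs_of_nonneg (sub_nonneg.2 hab), abs_of_nonneg (sub_nonneg.2 hmono), hexp,
    rpow_add hb, rpow_mul hb.le, hconst]
  have tangent := rpow_add_mul_rpow_sub_one_mul_sub_le_rpow ha hb hα.le
  calc (b - a) ^ (p - 1) * ((b ^ (α - 1)) ^ (p - 1) * b ^ α)
      = ((b - a) * b ^ (α - 1)) ^ (p - 1) * b ^ α := by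
        rw [mul_rpow (by linarith) (by positivity)]; ring
    _ ≤ ((-α)⁻¹ * (a ^ α - b ^ α)) ^ (p - 1) * b ^ α := by
        gcongr ?_ ^ _ * _
        rw [inv_mul_eq_div, le_div_iff₀ (by linarith)]; linarith
    _ = ((-α)⁻¹) ^ (p - 1) * (a ^ α - b ^ α) ^ (p - 1) * b ^ α := by
        rw [mul_rpow (inv_pos.2 (neg_pos.2 hα)).le (by linarith)]

/-- **Second algebraic inequality for negative powers** (Lemma A.2 of the paper). -/
theorem second_algebraic_inequality
    (p t a b : ℝ) (hp : 1 < p) (ht : p - 1 < t) (ha : 0 < a) (hb : 0 < b) :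
    |b - a| ^ (p - 1) * min (a ^ (-t)) (b ^ (-t)) ≤
      (p / (t - p + 1)) ^ (p - 1) *
        |a ^ ((-t + p - 1) / p) - b ^ ((-t + p - 1) / p)| ^ (p - 1) *
        min (a ^ ((-t + p - 1) / p)) (b ^ ((-t + p - 1) / p)) := by
  rcases le_total a b with hab | hba
  · exact second_algebraic_inequality_of_le p t a b hp ht ha hab
  · have := second_algebraic_inequality_of_le p t b a hp ht hb hba
    rwa [abs_sub_comm, min_comm, abs_sub_comm (b ^ _), min_comm (b ^ _)] at this
end
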